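/- Let A be an Archimedean semiprime f-algebra. The set A_b of bounded elements (elements a with a² ≤ μ|a| for some μ > 0) is a subalgebra of A: it is a vector subspace closed under multiplication. -/
import Mathlib


/-!  Setting: `A` is a (possibly non-unital) commutative ring which is also a lattice,
with a translation-invariant order (i.e. a lattice-ordered additive group). -/

section Defs

variable (A : Type*) [NonUnitalCommRing A] [Lattice A]
  [CovariantClass A A (· + ·) (· ≤ ·)]

/-- The positive cone is closed under multiplication (lattice-ordered algebra/ring). -/
def MulPos : Prop := ∀ a b : A, 0 ≤ a → 0 ≤ b → 0 ≤ a * b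

/-- The `f`-algebra condition: `a ⊓ b = 0` implies `(a*c) ⊓ b = 0` and `(c*a) ⊓ b = 0`
for every `c ≥ 0`. -/
def FCond : Prop := ∀ a b c : A, a ⊓ b = 0 → 0 ≤ c → (a * c) ⊓ b = 0 ∧ (c * a) ⊓ b = 0

/-- Semiprime: no nonzero nilpotent elements (for commutative rings this is
equivalent to: squares vanish only at `0`). -/
def Semiprime : Prop := ∀ a : A, a * a = 0 → a = 0

/-- The (additive) order on `A` is Archimedean. -/
def ArchOrder : Prop := ∀ x y : A, (∀ n : ℕ, n • x ≤ y) → x ≤ 0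

/-- `b` is a quasi-inverse of `a`. -/
def IsQuasiInverse (a b : A) : Prop := a + b = a * b

/-- `a` is quasi-invertible. -/
def QuasiInvertible (a : A) : Prop := ∃ b : A, a + b = a * b

/-- `A` is bounded quasi-inversion closed. -/
def BddQuasiInvClosed : Prop :=
  ∀ a : A, |a| ≤ |a * a - a| → QuasiInvertible A a

/-- A bounded element: `a² ≤ μ|a|` for some real `μ > 0`. -/
def IsBoundedElem [Module ℝ A] (a : A) : Prop := ∃ μ : ℝ, 0 < μ ∧ a * a ≤ μ • |a|

end Defs


set_option linter.unusedSectionVars false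

section Aux

variable {A : Type*} [NonUnitalCommRing A] [Lattice A]
  [CovariantClass A A (· + ·) (· ≤ ·)] [Module ℝ A]

/-- mult by nonneg is monotone -/
lemma aux_mulm (hmul : MulPos A) {c x y : A} (hc : 0 ≤ c) (h : x ≤ y) : c * x ≤ c * y := by
  have := hmul c (y - x) hc (sub_nonneg.mpr h)
  rw [mul_sub] at this
  exact sub_nonneg.mp this

/-- smul by nonneg scalar is monotone -/
lemma aux_smulm (hsmul : ∀ (r : ℝ) (x : A), 0 ≤ r → 0 ≤ x → 0 ≤ r • x)
    {r : ℝ} (hr : 0 ≤ r) {x y : A} (h : x ≤ y) : r • x ≤ r • y := by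
  have := hsmul r (y - x) hr (sub_nonneg.mpr h)
  rw [smul_sub] at this
  exact sub_nonneg.mp this

/-- smul mono in the scalar on nonneg vectors -/
lemma aux_smuls (hsmul : ∀ (r : ℝ) (x : A), 0 ≤ r → 0 ≤ x → 0 ≤ r • x)
    {s t : ℝ} (h : s ≤ t) {x : A} (hx : 0 ≤ x) : s • x ≤ t • x := by
  have := hsmul (t - s) x (by linarith) hx
  rw [sub_smul] at this
  exact sub_nonneg.mp this

/-- Archimedean: real smul commutes with multiplication of nonneg elements -/
lemma aux_smul_mul (hsmul : ∀ (r : ℝ) (x : A), 0 ≤ r → 0 ≤ x → 0 ≤ r • x)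
    (hmul : MulPos A) (harch : ArchOrder A)
    (r : ℝ) {a b : A} (ha : 0 ≤ a) (hb : 0 ≤ b) : (r • a) * b = r • (a * b) := by
  have hab : 0 ≤ a * b := hmul a b ha hb
  have gmono : ∀ x y : A, x ≤ y → x * b ≤ y * b := by
    intro x y h
    have := hmul (y - x) b (sub_nonneg.mpr h) hb
    rw [sub_mul] at this
    exact sub_nonneg.mp this
  have hz : ∀ (m : ℤ) (x : A), ((m : ℝ) • x) * b = (m : ℝ) • (x * b) := by
    intro m x
    rw [Int.cast_smul_eq_zsmul, Int.cast_smul_eq_zsmul]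
    exact map_zsmul (AddMonoidHom.mulRight b) m x
  have hn' : ∀ (n : ℕ) (x : A), (n : ℝ) • (x * b) = ((n : ℝ) • x) * b := by
    intro n x
    rw [Nat.cast_smul_eq_nsmul, Nat.cast_smul_eq_nsmul]
    exact (map_nsmul (AddMonoidHom.mulRight b) n x).symm
  -- key bound, for any real s
  have main : ∀ s : ℝ, ∀ n : ℕ,
      (n : ℝ) • ((s • a) * b - s • (a * b)) ≤ a * b ∧
      (n : ℝ) • (s • (a * b) - (s • a) * b) ≤ a * b := by
    intro s n
    set m : ℤ := ⌊(n : ℝ) * s⌋ with hm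
    have f1 : (m : ℝ) ≤ (n : ℝ) * s := Int.floor_le _
    have f2 : (n : ℝ) * s ≤ (m : ℝ) + 1 := (Int.lt_floor_add_one _).le
    have e1 : (n : ℝ) • ((s • a) * b) = (((n : ℝ) * s) • a) * b := by
      rw [hn', smul_smul]
    have e2 : (n : ℝ) • (s • (a * b)) = ((n : ℝ) * s) • (a * b) := by
      rw [smul_smul]
    -- lower/upper bounds on the product term
    have p1 : ((m : ℝ) • a) * b ≤ (((n : ℝ) * s) • a) * b :=
      gmono _ _ (aux_smuls hsmul f1 ha)
    have p2 : (((n : ℝ) * s) • a) * b ≤ (((m : ℝ) + 1) • a) * b :=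
      gmono _ _ (aux_smuls hsmul f2 ha)
    have q1 : (m : ℝ) • (a * b) ≤ ((n : ℝ) * s) • (a * b) := aux_smuls hsmul f1 hab
    have q2 : ((n : ℝ) * s) • (a * b) ≤ ((m : ℝ) + 1) • (a * b) := aux_smuls hsmul f2 hab
    have c1 : ((m : ℝ) • a) * b = (m : ℝ) • (a * b) := hz m a
    have c2 : (((m : ℝ) + 1) • a) * b = ((m : ℝ) + 1) • (a * b) := by
      have : ((m : ℝ) + 1) = ((m + 1 : ℤ) : ℝ) := by push_cast; ring
      rw [this, hz]
    constructor
    · rw [smul_sub, e1, e2]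
      have : (((n : ℝ) * s) • a) * b - ((n : ℝ) * s) • (a * b)
          ≤ ((m : ℝ) + 1) • (a * b) - (m : ℝ) • (a * b) :=
        sub_le_sub (by rw [← c2]; exact p2) q1
      calc (((n : ℝ) * s) • a) * b - ((n : ℝ) * s) • (a * b)
          ≤ ((m : ℝ) + 1) • (a * b) - (m : ℝ) • (a * b) := this
        _ = a * b := by rw [add_smul, one_smul]; abel
    · rw [smul_sub, e1, e2]
      have : ((n : ℝ) * s) • (a * b) - (((n : ℝ) * s) • a) * b
          ≤ ((m : ℝ) + 1) • (a * b) - (m : ℝ) • (a * b) :=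
        sub_le_sub q2 (by rw [← c1]; exact p1)
      calc ((n : ℝ) * s) • (a * b) - (((n : ℝ) * s) • a) * b
          ≤ ((m : ℝ) + 1) • (a * b) - (m : ℝ) • (a * b) := this
        _ = a * b := by rw [add_smul, one_smul]; abel
  have h1 : (r • a) * b - r • (a * b) ≤ 0 := by
    apply harch _ (a * b)
    intro n
    rw [← Nat.cast_smul_eq_nsmul ℝ]
    exact (main r n).1
  have h2 : r • (a * b) - (r • a) * b ≤ 0 := by
    apply harch _ (a * b)
    intro n
    rw [← Nat.cast_smul_eq_nsmul ℝ]
    exact (main r n).2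
  have := le_antisymm (sub_nonpos.mp h1) (sub_nonpos.mp h2)
  exact this

/-- a⁺ * a⁻ = 0 -/
lemma aux_ppnp (hf : FCond A) (a : A) : a⁺ * a⁻ = 0 := by
  have h := posPart_inf_negPart_eq_zero a
  have h1 := (hf a⁺ a⁻ a⁻ h (negPart_nonneg a)).1
  rw [inf_comm] at h1
  have h2 := (hf a⁻ (a⁺ * a⁻) a⁺ h1 (posPart_nonneg a)).2
  rwa [inf_idem] at h2

/-- products of orthogonal elements by nonnegs are orthogonal -/
lemma aux_orth_mul (hf : FCond A) {x y c d : A} (hxy : x ⊓ y = 0) (hc : 0 ≤ c) (hd : 0 ≤ d) :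
    (c * x) ⊓ (d * y) = 0 := by
  have s1 := (hf x y c hxy hc).2
  rw [inf_comm] at s1
  have s2 := (hf y (c * x) d s1 hd).2
  rwa [inf_comm] at s2

lemma aux_orth_posPart {u v : A} (huv : u ⊓ v = 0) : (u - v)⁺ = u := by
  have hsup : u ⊔ v = u + v := by
    have := inf_add_sup u v
    rw [huv, zero_add] at this
    exact this
  calc (u - v)⁺ = (u - v) ⊔ (v - v) := by rw [sub_self, posPart_def]
    _ = (u ⊔ v) - v := (sup_sub u v v).symm
    _ = u := by rw [hsup]; abel

lemma aux_orth_abs {u v : A} (huv : u ⊓ v = 0) : |u - v| = u + v := by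
  have hp : (u - v)⁺ = u := aux_orth_posPart huv
  have hn : (u - v)⁻ = v := by
    rw [← posPart_neg, neg_sub]
    exact aux_orth_posPart (by rwa [inf_comm] at huv)
  rw [← posPart_add_negPart (u - v), hp, hn]

/-- Riesz: orthogonality is additive -/
lemma aux_riesz {a b c : A} (ha : 0 ≤ a) (hb : 0 ≤ b) (hc : 0 ≤ c)
    (h1 : a ⊓ b = 0) (h2 : a ⊓ c = 0) : a ⊓ (b + c) = 0 := by
  have key : a ⊓ (b + c) ≤ (a ⊓ b) + (a ⊓ c) := by
    rw [inf_add _ _ (a ⊓ c), add_inf, add_inf]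
    refine le_inf (le_inf ?_ ?_) (le_inf ?_ ?_)
    · exact le_trans inf_le_left (le_add_of_nonneg_right ha)
    · exact le_trans inf_le_left (le_add_of_nonneg_right hc)
    · exact le_trans inf_le_left (le_add_of_nonneg_left hb)
    · exact inf_le_right
  rw [h1, h2, add_zero] at key
  exact le_antisymm key (le_inf ha (add_nonneg hb hc))

/-- a² = |a|² -/
lemma aux_sq_abs (hf : FCond A) (a : A) : a * a = |a| * |a| := by
  have h0 : a⁺ * a⁻ = 0 := aux_ppnp hf a
  have h0' : a⁻ * a⁺ = 0 := by rw [mul_comm]; exact h0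
  have e1 : a * a = a⁺ * a⁺ + a⁻ * a⁻ := by
    conv_lhs => rw [← posPart_sub_negPart a]
    rw [mul_sub, sub_mul, sub_mul, h0, h0']
    abel
  have e2 : |a| * |a| = a⁺ * a⁺ + a⁻ * a⁻ := by
    conv_lhs => rw [← posPart_add_negPart a]
    rw [mul_add, add_mul, add_mul, h0, h0']
    abel
  rw [e1, e2]

lemma aux_sq_nonneg (hmul : MulPos A) (hf : FCond A) (a : A) : 0 ≤ a * a := by
  have h0 : a⁺ * a⁻ = 0 := aux_ppnp hf a
  have h0' : a⁻ * a⁺ = 0 := by rw [mul_comm]; exact h0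
  have e1 : a * a = a⁺ * a⁺ + a⁻ * a⁻ := by
    conv_lhs => rw [← posPart_sub_negPart a]
    rw [mul_sub, sub_mul, sub_mul, h0, h0']
    abel
  rw [e1]
  exact add_nonneg (hmul _ _ (posPart_nonneg a) (posPart_nonneg a))
    (hmul _ _ (negPart_nonneg a) (negPart_nonneg a))

/-- |a b| = |a| |b| -/
lemma aux_abs_mul (hmul : MulPos A) (hf : FCond A) (a b : A) : |a * b| = |a| * |b| := by
  set u := a⁺ * b⁺ + a⁻ * b⁻ with hu
  set v := a⁺ * b⁻ + a⁻ * b⁺ with hv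
  have hab : a * b = u - v := by
    conv_lhs => rw [← posPart_sub_negPart a, ← posPart_sub_negPart b]
    rw [mul_sub, sub_mul, sub_mul, hu, hv]
    abel
  have pb := posPart_inf_negPart_eq_zero b
  have pa := posPart_inf_negPart_eq_zero a
  have pa' : a⁻ ⊓ a⁺ = 0 := by rwa [inf_comm] at pa
  have o1 : (a⁺ * b⁺) ⊓ (a⁺ * b⁻) = 0 :=
    aux_orth_mul hf pb (posPart_nonneg a) (posPart_nonneg a)
  have o2 : (a⁻ * b⁻) ⊓ (a⁺ * b⁻) = 0 := by
    have := aux_orth_mul hf pa' (negPart_nonneg b) (negPart_nonneg b)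
    rwa [mul_comm b⁻ a⁻, mul_comm b⁻ a⁺] at this
  have o3 : (a⁺ * b⁺) ⊓ (a⁻ * b⁺) = 0 := by
    have := aux_orth_mul hf pa (posPart_nonneg b) (posPart_nonneg b)
    rwa [mul_comm b⁺ a⁺, mul_comm b⁺ a⁻] at this
  have o4 : (a⁻ * b⁻) ⊓ (a⁻ * b⁺) = 0 := by
    have hb' : b⁻ ⊓ b⁺ = 0 := by rwa [inf_comm] at pb
    exact aux_orth_mul hf hb' (negPart_nonneg a) (negPart_nonneg a)
  have m1 : 0 ≤ a⁺ * b⁺ := hmul _ _ (posPart_nonneg a) (posPart_nonneg b)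
  have m2 : 0 ≤ a⁻ * b⁻ := hmul _ _ (negPart_nonneg a) (negPart_nonneg b)
  have m3 : 0 ≤ a⁺ * b⁻ := hmul _ _ (posPart_nonneg a) (negPart_nonneg b)
  have m4 : 0 ≤ a⁻ * b⁺ := hmul _ _ (negPart_nonneg a) (posPart_nonneg b)
  have w1 : (a⁺ * b⁻) ⊓ u = 0 := by
    rw [hu]
    exact aux_riesz m3 m1 m2 (by rwa [inf_comm] at o1) (by rwa [inf_comm] at o2)
  have w2 : (a⁻ * b⁺) ⊓ u = 0 := by
    rw [hu]
    exact aux_riesz m4 m1 m2 (by rwa [inf_comm] at o3) (by rwa [inf_comm] at o4)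
  have huv : u ⊓ v = 0 := by
    rw [hv]
    exact aux_riesz (add_nonneg m1 m2) m3 m4
      (by rwa [inf_comm] at w1) (by rwa [inf_comm] at w2)
  have habs : |a * b| = u + v := by rw [hab]; exact aux_orth_abs huv
  have e2 : |a| * |b| = u + v := by
    conv_lhs => rw [← posPart_add_negPart a, ← posPart_add_negPart b]
    rw [mul_add, add_mul, add_mul, hu, hv]
    abel
  rw [habs, e2]

/-- Key lemma: if b ≥ 0 and b² ≤ μ b, then b x ≤ μ x for all x ≥ 0 -/
lemma aux_key (hsmul : ∀ (r : ℝ) (x : A), 0 ≤ r → 0 ≤ x → 0 ≤ r • x)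
    (hmul : MulPos A) (hf : FCond A) (hsp : Semiprime A) (harch : ArchOrder A)
    {b : A} (hb : 0 ≤ b) {μ : ℝ} (hμ : 0 ≤ μ) (hbb : b * b ≤ μ • b)
    {x : A} (hx : 0 ≤ x) : b * x ≤ μ • x := by
  set y := b * x - μ • x with hy
  have hbx : 0 ≤ b * x := hmul b x hb hx
  have hby : b * y ≤ 0 := by
    have k1 : b * (b * x) ≤ μ • (b * x) := by
      calc b * (b * x) = (b * b) * x := (mul_assoc b b x).symm
        _ ≤ (μ • b) * x := by
            have := hmul ((μ • b) - b * b) x (sub_nonneg.mpr hbb) hx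
            rw [sub_mul] at this
            exact sub_nonneg.mp this
        _ = μ • (b * x) := aux_smul_mul hsmul hmul harch μ hb hx
    have k2 : b * (μ • x) = μ • (b * x) := by
      rw [mul_comm b (μ • x), aux_smul_mul hsmul hmul harch μ hx hb, mul_comm x b]
    rw [hy, mul_sub, k2]
    exact sub_nonpos.mpr k1
  -- b * y⁺ = (b y)⁺ = 0
  have horth : (b * y⁺) ⊓ (b * y⁻) = 0 :=
    aux_orth_mul hf (posPart_inf_negPart_eq_zero y) hb hb
  have hdecomp : (b * y⁺) - (b * y⁻) = b * y := by
    rw [← mul_sub, posPart_sub_negPart]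
  have hbyp : b * y⁺ = 0 := by
    have := aux_orth_posPart horth
    rw [hdecomp] at this
    rw [← this]
    exact posPart_eq_zero.mpr hby
  set d := y⁺ with hd
  have hd0 : 0 ≤ d := posPart_nonneg y
  have hdle : d ≤ b * x := by
    have hyle : y ≤ b * x := by
      rw [hy]
      exact sub_le_self _ (hsmul μ x hμ hx)
    calc d ≤ (b * x)⁺ := posPart_mono hyle
      _ = b * x := posPart_eq_self.mpr hbx
  have hdd : d * d = 0 := by
    have up : d * d ≤ 0 := by
      calc d * d ≤ d * (b * x) := aux_mulm hmul hd0 hdle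
        _ = (b * d) * x := by rw [← mul_assoc, mul_comm d b]
        _ = 0 := by rw [hbyp, zero_mul]
    exact le_antisymm up (hmul d d hd0 hd0)
  have : d = 0 := hsp d hdd
  have : y ≤ 0 := posPart_eq_zero.mp this
  rw [hy] at this
  exact sub_nonpos.mp this

/-- |r • a| = |r| • |a| -/
lemma aux_abs_smul (hsmul : ∀ (r : ℝ) (x : A), 0 ≤ r → 0 ≤ x → 0 ≤ r • x)
    (r : ℝ) (a : A) : |r • a| = |r| • |a| := by
  have hpos : ∀ (s : ℝ), 0 < s → ∀ x : A, |s • x| = s • |x| := by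
    intro s hs x
    have le1 : |s • x| ≤ s • |x| := by
      refine abs_le'.mpr ⟨aux_smulm hsmul hs.le (le_abs_self x), ?_⟩
      have := aux_smulm hsmul hs.le (neg_le_abs x)
      rwa [smul_neg] at this
    have le2 : s • |x| ≤ |s • x| := by
      have hinv : (0:ℝ) < 1 / s := by positivity
      have hxx : x = (1 / s) • (s • x) := by
        rw [smul_smul, one_div_mul_cancel hs.ne', one_smul]
      have habs : |x| ≤ (1 / s) • |s • x| := by
        refine abs_le'.mpr ⟨?_, ?_⟩
        · calc x = (1 / s) • (s • x) := hxx
            _ ≤ (1 / s) • |s • x| := aux_smulm hsmul hinv.le (le_abs_self _)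
        · calc -x = (1 / s) • (-(s • x)) := by rw [smul_neg, ← hxx]
            _ ≤ (1 / s) • |s • x| := aux_smulm hsmul hinv.le (neg_le_abs _)
      calc s • |x| ≤ s • ((1 / s) • |s • x|) := aux_smulm hsmul hs.le habs
        _ = |s • x| := by rw [smul_smul, mul_one_div_cancel hs.ne', one_smul]
    exact le_antisymm le1 le2
  rcases lt_trichotomy r 0 with hr | hr | hr
  · have h : r • a = (-r) • (-a) := by rw [neg_smul_neg]
    rw [h, hpos (-r) (by linarith) (-a), abs_neg, abs_of_neg hr]
  · simp [hr]
  · rw [hpos r hr a, abs_of_pos hr]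

end Aux

/-- The set of bounded elements is a subalgebra: a vector subspace closed under
multiplication. -/
theorem boundedElems_subalgebra {A : Type*} [NonUnitalCommRing A] [Lattice A]
    [CovariantClass A A (· + ·) (· ≤ ·)] [Module ℝ A]
    (hsmul : ∀ (r : ℝ) (x : A), 0 ≤ r → 0 ≤ x → 0 ≤ r • x)
    (hmul : MulPos A) (hf : FCond A) (hsp : Semiprime A) (harch : ArchOrder A) :
    IsBoundedElem A 0 ∧
    (∀ a b : A, IsBoundedElem A a → IsBoundedElem A b → IsBoundedElem A (a + b)) ∧
    (∀ (r : ℝ) (a : A), IsBoundedElem A a → IsBoundedElem A (r • a)) ∧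
    (∀ a b : A, IsBoundedElem A a → IsBoundedElem A b → IsBoundedElem A (a * b)) := by
  have key : ∀ (a : A) (μ : ℝ), 0 < μ → a * a ≤ μ • |a| → ∀ x : A, 0 ≤ x → |a| * x ≤ μ • x := by
    intro a μ hμ hbound x hx
    have hbb : |a| * |a| ≤ μ • |a| := by rw [← aux_sq_abs hf a]; exact hbound
    exact aux_key hsmul hmul hf hsp harch (abs_nonneg a) hμ.le hbb hx
  refine ⟨⟨1, one_pos, by simp⟩, ?_, ?_, ?_⟩
  · -- addition
    rintro a b ⟨μ, hμ, ha⟩ ⟨ν, hν, hb⟩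
    refine ⟨μ + ν, by linarith, ?_⟩
    have h1 : |a| * |a + b| ≤ μ • |a + b| := key a μ hμ ha _ (abs_nonneg _)
    have h2 : |b| * |a + b| ≤ ν • |a + b| := key b ν hν hb _ (abs_nonneg _)
    calc (a + b) * (a + b) = |a + b| * |a + b| := aux_sq_abs hf (a + b)
      _ ≤ |a + b| * (|a| + |b|) := aux_mulm hmul (abs_nonneg _) (abs_add_le a b)
      _ = |a| * |a + b| + |b| * |a + b| := by rw [mul_add, mul_comm |a + b| |a|, mul_comm |a + b| |b|]
      _ ≤ μ • |a + b| + ν • |a + b| := add_le_add h1 h2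
      _ = (μ + ν) • |a + b| := (add_smul μ ν _).symm
  · -- scalar multiplication
    rintro r a ⟨μ, hμ, ha⟩
    rcases eq_or_ne r 0 with hr | hr
    · exact ⟨1, one_pos, by simp [hr]⟩
    · have hrabs : 0 < |r| := abs_pos.mpr hr
      refine ⟨|r| * μ, by positivity, ?_⟩
      have hA := abs_nonneg a
      have step1 : (r • a) * (r • a) = (|r| * |r|) • (|a| * |a|) := by
        calc (r • a) * (r • a) = |r • a| * |r • a| := aux_sq_abs hf (r • a)
          _ = (|r| • |a|) * (|r| • |a|) := by rw [aux_abs_smul hsmul r a]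
          _ = |r| • (|a| * (|r| • |a|)) := by
              rw [aux_smul_mul hsmul hmul harch |r| hA (hsmul |r| |a| (abs_nonneg r) hA)]
          _ = |r| • ((|r| • |a|) * |a|) := by rw [mul_comm |a| (|r| • |a|)]
          _ = |r| • (|r| • (|a| * |a|)) := by
              rw [aux_smul_mul hsmul hmul harch |r| hA hA]
          _ = (|r| * |r|) • (|a| * |a|) := by rw [smul_smul]
      have step2 : (|r| * |r|) • (|a| * |a|) ≤ (|r| * |r|) • (μ • |a|) := by
        apply aux_smulm hsmul (by positivity)
        rw [← aux_sq_abs hf a]; exact ha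
      calc (r • a) * (r • a) = (|r| * |r|) • (|a| * |a|) := step1
        _ ≤ (|r| * |r|) • (μ • |a|) := step2
        _ = (|r| * μ) • (|r| • |a|) := by rw [smul_smul, smul_smul]; ring_nf
        _ = (|r| * μ) • |r • a| := by rw [aux_abs_smul hsmul r a]
  · -- multiplication
    rintro a b ⟨μ, hμ, ha⟩ ⟨ν, hν, hb⟩
    refine ⟨μ * ν, by positivity, ?_⟩
    have hA := abs_nonneg a
    have hB := abs_nonneg b
    have hqq : 0 ≤ |b| * |b| := hmul _ _ hB hB
    have hqp : 0 ≤ |b| * |a| := hmul _ _ hB hA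
    have h1 : |b| * (|a| * |b|) = |a| * (|b| * |b|) := by
      rw [← mul_assoc, mul_comm |b| |a|, mul_assoc]
    have step1 : (a * b) * (a * b) = |a| * (|a| * (|b| * |b|)) := by
      rw [aux_sq_abs hf (a * b), aux_abs_mul hmul hf a b, mul_assoc, h1]
    have step2 : |a| * (|a| * (|b| * |b|)) ≤ μ • (|a| * (|b| * |b|)) :=
      key a μ hμ ha _ (hmul _ _ hA hqq)
    have step3 : |a| * (|b| * |b|) = |b| * (|b| * |a|) := by
      rw [mul_comm |a| (|b| * |b|), mul_assoc, mul_comm |b| |a|]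
    have step4 : |b| * (|b| * |a|) ≤ ν • (|b| * |a|) := key b ν hν hb _ hqp
    calc (a * b) * (a * b) = |a| * (|a| * (|b| * |b|)) := step1
      _ ≤ μ • (|a| * (|b| * |b|)) := step2
      _ = μ • (|b| * (|b| * |a|)) := by rw [step3]
      _ ≤ μ • (ν • (|b| * |a|)) := aux_smulm hsmul hμ.le step4
      _ = (μ * ν) • (|a| * |b|) := by rw [smul_smul, mul_comm |b| |a|]
      _ = (μ * ν) • |a * b| := by rw [aux_abs_mul hmul hf a b]
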